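/- arXiv:2102.11512 — 15 statements merged into one kernel-verified Lean document; each statement's English description precedes it below -/
import Mathlib

section
/- Every nil-reversible ring is abelian, i.e., every idempotent is central. -/
/-- Every nil-reversible ring is abelian: every idempotent is central. -/
theorem nilReversible_is_abelian (R : Type*) [Ring R]
    (hnr : ∀ a : R, IsNilpotent a → ∀ x : R, x * a = 0 ↔ a * x = 0) :
    ∀ e : R, e * e = e → e ∈ Set.center R := by
  intro e he
  rw [Semigroup.mem_center_iff]
  intro x
  -- a = e*x - e*x*e
  set a := e * x - e * x * e with ha
  have hae : a * e = 0 := by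
    rw [ha, sub_mul, mul_assoc (e*x) e e, he, sub_self]
  have hea : e * a = a := by
    rw [ha, mul_sub, ← mul_assoc e (e*x) e, ← mul_assoc e e x, he]
  have hanil : IsNilpotent a := ⟨2, by
    rw [pow_two]; nth_rewrite 2 [← hea]
    rw [← mul_assoc, hae, zero_mul]⟩
  have ha0 : a = 0 := by
    rw [← hea]; exact (hnr a hanil e).mpr hae
  -- b = x*e - e*x*e
  set b := x * e - e * x * e with hb
  have heb : e * b = 0 := by
    rw [hb, mul_sub, ← mul_assoc e (e*x) e, ← mul_assoc e e x, he, ← mul_assoc e x e, sub_self]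
  have hbe : b * e = b := by
    rw [hb, sub_mul, mul_assoc x e e, he, mul_assoc (e*x) e e, he]
  have hbnil : IsNilpotent b := ⟨2, by
    rw [pow_two]; nth_rewrite 1 [← hbe]
    rw [mul_assoc, heb, mul_zero]⟩
  have hb0 : b = 0 := by rw [← hbe]; exact (hnr b hbnil e).mp heb
  have h1 : e * x = e * x * e := sub_eq_zero.mp ha0
  have h2 : x * e = e * x * e := sub_eq_zero.mp hb0
  rw [h1, h2]
end

section
/- In a nil-reversible ring, every nilpotent element lies in the prime radical; hence nil-reversible rings are 2-primal. -/
/-- Powers of a nilpotent element are nilpotent (with explicit witness). -/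
lemma auxNilrev_pow_nilpotent {R : Type*} [Ring R] {a : R} {n : ℕ} (_hn : 1 ≤ n)
    (ha : a ^ n = 0) {i : ℕ} (hi : 1 ≤ i) : IsNilpotent (a ^ i) :=
  ⟨n, by rw [← pow_mul]; exact pow_eq_zero_of_le (Nat.le_mul_of_pos_left n hi) ha⟩

/-- Key word lemma: in a nil-reversible ring, if `a ^ n = 0`, then
`a^i * (r*a^2)^k * r * a^j = 0` whenever `i + j + 2k ≥ n`. -/
lemma auxNilrev_word {R : Type*} [Ring R]
    (hnr : ∀ a : R, IsNilpotent a → ∀ x : R, x * a = 0 ↔ a * x = 0)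
    {a : R} {n : ℕ} (hn : 1 ≤ n) (ha : a ^ n = 0) (r : R) :
    ∀ k i j : ℕ, 1 ≤ i → 1 ≤ j → n ≤ i + j + 2 * k →
      a ^ i * ((r * a ^ 2) ^ k * (r * a ^ j)) = 0 := by
  intro k
  induction k with
  | zero =>
      intro i j hi hj hsum
      have hij : a ^ (j + i) = 0 :=
        pow_eq_zero_of_le (by omega) ha
      have h1 : (r * a ^ j) * a ^ i = 0 := by
        rw [mul_assoc, ← pow_add, hij, mul_zero]
      have h2 : a ^ i * (r * a ^ j) = 0 :=
        (hnr (a ^ i) (auxNilrev_pow_nilpotent hn ha hi) (r * a ^ j)).mp h1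
      rw [pow_zero, one_mul, h2]
  | succ k ih =>
      intro i j hi hj hsum
      by_cases hij : n ≤ i + j
      · -- then the two outer powers already multiply to zero
        have hij0 : a ^ (j + i) = 0 := pow_eq_zero_of_le (by omega) ha
        have h1 : ((r * a ^ 2) ^ (k + 1) * (r * a ^ j)) * a ^ i = 0 := by
          rw [mul_assoc, mul_assoc, ← pow_add, hij0, mul_zero, mul_zero]
        exact (hnr (a ^ i) (auxNilrev_pow_nilpotent hn ha hi)
          ((r * a ^ 2) ^ (k + 1) * (r * a ^ j))).mp h1
      · -- use the IH with exponents (i+j, 2)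
        have hIH : a ^ (i + j) * ((r * a ^ 2) ^ k * (r * a ^ 2)) = 0 :=
          ih (i + j) 2 (by omega) (by omega) (by omega)
        -- hence a^j * (a^i * (r*a^2)^(k+1) * r) = 0
        have h2 : a ^ j * (a ^ i * ((r * a ^ 2) ^ (k + 1) * r)) = 0 := by
          rw [← mul_assoc, ← pow_add, Nat.add_comm j i, pow_succ,
            ← mul_assoc (a ^ (i + j)) ((r * a ^ 2) ^ k * (r * a ^ 2)) r, hIH, zero_mul]
        have h3 : (a ^ i * ((r * a ^ 2) ^ (k + 1) * r)) * a ^ j = 0 :=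
          (hnr (a ^ j) (auxNilrev_pow_nilpotent hn ha hj) _).mpr h2
        simpa only [mul_assoc] using h3

/-- Expansion of powers of `a * r * a`. -/
lemma auxNilrev_pow_ara {R : Type*} [Ring R] (a r : R) :
    ∀ k : ℕ, (a * r * a) ^ (k + 1) = a ^ 1 * ((r * a ^ 2) ^ k * (r * a ^ 1)) := by
  intro k
  induction k with
  | zero => simp [mul_assoc]
  | succ k ih =>
      rw [pow_succ, ih]
      simp only [pow_succ, pow_zero, one_mul, pow_one, pow_two, mul_assoc]

/-- In a nil-reversible ring, every nilpotent element lies in every prime two-sided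
ideal, hence in the prime radical; so nil-reversible rings are 2-primal. -/
theorem nilReversible_nilpotent_mem_primeRadical (R : Type*) [Ring R]
    (hnr : ∀ a : R, IsNilpotent a → ∀ x : R, x * a = 0 ↔ a * x = 0) :
    ∀ a : R, IsNilpotent a →
      ∀ P : TwoSidedIdeal R, (P : Set R) ≠ Set.univ →
        (∀ x y : R, (∀ r : R, x * r * y ∈ P) → x ∈ P ∨ y ∈ P) →
        a ∈ P := by
  intro a ha P hP hprime
  obtain ⟨n, hn⟩ := ha
  clear hP
  induction n generalizing a with
  | zero =>
      have : a = 0 := by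
        calc a = a * a ^ 0 := by rw [pow_zero, mul_one]
          _ = 0 := by rw [hn, mul_zero]
      rw [this]; exact zero_mem P
  | succ k ih =>
      rcases Nat.eq_zero_or_pos k with hk0 | hk1
      · subst hk0
        rw [pow_one] at hn
        rw [hn]; exact zero_mem P
      · -- k ≥ 1, n = k+1 ≥ 2
        have key : ∀ r : R, a * r * a ∈ P := by
          intro r
          have hzero : (a * r * a) ^ k = 0 := by
            obtain ⟨k', rfl⟩ := Nat.exists_eq_add_of_le hk1
            rw [Nat.add_comm 1 k', auxNilrev_pow_ara]
            exact auxNilrev_word hnr (by omega) hn r k' 1 1 le_rfl le_rfl (by omega)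
          exact ih (a * r * a) hzero
        rcases hprime a a key with h | h <;> exact h
end

section
/- Every nil-reversible ring is weakly semicommutative: if ab = 0 then arb is nilpotent for every r in R. -/
/-- Every nil-reversible ring is weakly semicommutative. -/
theorem nilReversible_is_weaklySemicommutative (R : Type*) [Ring R]
    (hnr : ∀ a : R, IsNilpotent a → ∀ x : R, x * a = 0 ↔ a * x = 0) :
    ∀ a b : R, a * b = 0 → ∀ r : R, IsNilpotent (a * r * b) := by
  intro a b hab r
  have ht : IsNilpotent (b * a) := ⟨2, by
    have : (b * a) ^ 2 = b * (a * b) * a := by noncomm_ring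
    rw [this, hab, mul_zero, zero_mul]⟩
  -- a * (b*a) = 0, hence (b*a) * a = 0
  have h1 : a * (b * a) = 0 := by
    have : a * (b * a) = (a * b) * a := by noncomm_ring
    rw [this, hab, zero_mul]
  have h2 : (b * a) * a = 0 := (hnr (b * a) ht a).mp h1
  -- hence (b*a) * (a*r) = 0, hence (a*r) * (b*a) = 0
  have h3 : (b * a) * (a * r) = 0 := by
    have : (b * a) * (a * r) = ((b * a) * a) * r := by noncomm_ring
    rw [this, h2, zero_mul]
  have h4 : (a * r) * (b * a) = 0 := (hnr (b * a) ht (a * r)).mpr h3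
  exact ⟨2, by
    have : (a * r * b) ^ 2 = ((a * r) * (b * a)) * (r * b) := by noncomm_ring
    rw [this, h4, zero_mul]⟩
end

section
/- A nil-reversible ring that is right principally projective is reduced. -/
/-- A nil-reversible right principally projective ring is reduced. -/
theorem nilReversible_rpp_is_reduced (R : Type*) [Ring R]
    (hnr : ∀ a : R, IsNilpotent a → ∀ x : R, x * a = 0 ↔ a * x = 0)
    (hrpp : ∀ a : R, ∃ e : R, e * e = e ∧ ∀ x : R, a * x = 0 ↔ ∃ r : R, x = e * r) :
    IsReduced R := by
  have sq : ∀ a : R, a * a = 0 → a = 0 := by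
    intro a ha
    obtain ⟨e, he, hr⟩ := hrpp a
    obtain ⟨r, hr1⟩ := (hr a).mp ha
    have hae : a * e = 0 := (hr e).mpr ⟨e, he.symm⟩
    have hnil : IsNilpotent a := ⟨2, by simpa [pow_two] using ha⟩
    have hea : e * a = 0 := (hnr a hnil e).mpr hae
    calc a = e * r := hr1
      _ = e * e * r := by rw [he]
      _ = e * (e * r) := by rw [mul_assoc]
      _ = e * a := by rw [hr1]
      _ = 0 := hea
  constructor
  intro a ⟨n, hn⟩
  induction n with
  | zero => simpa using congrArg (a * ·) hn
  | succ n ih =>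
    rcases Nat.eq_zero_or_pos n with h0 | hpos
    · subst h0; simpa using hn
    · apply ih
      apply sq
      have : a ^ n * a ^ n = a ^ (n - 1) * a ^ (n + 1) := by
        rw [← pow_add, ← pow_add]; congr 1; omega
      rw [this, hn, mul_zero]
end

section
/- A nil-reversible semiprime ring is reduced. -/
/-- A nil-reversible semiprime ring is reduced. -/
theorem nilReversible_semiprime_is_reduced (R : Type*) [Ring R]
    (hnr : ∀ a : R, IsNilpotent a → ∀ x : R, x * a = 0 ↔ a * x = 0)
    (hsp : ∀ a : R, (∀ r : R, a * r * a = 0) → a = 0) :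
    IsReduced R := by
  have sq : ∀ a : R, a * a = 0 → a = 0 := by
    intro a h
    refine hsp a (fun r => ?_)
    have hnil : IsNilpotent a := ⟨2, by rw [pow_two, h]⟩
    have h1 : (r * a) * a = 0 := by rw [mul_assoc, h, mul_zero]
    have h2 := (hnr a hnil (r * a)).mp h1
    rw [mul_assoc]; exact h2
  refine ⟨fun a ⟨n, hn⟩ => ?_⟩
  induction n with
  | zero =>
      simp only [pow_zero] at hn
      calc a = a * 1 := (mul_one a).symm
        _ = a * 0 := by rw [hn]
        _ = 0 := mul_zero a
  | succ n ih =>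
      rcases Nat.eq_zero_or_pos n with rfl | hpos
      · simpa using hn
      · apply ih
        apply sq
        have : a ^ n * a ^ n = a ^ (n - 1) * a ^ (n + 1) := by
          rw [← pow_add, ← pow_add]
          congr 1
          omega
        rw [this, hn, mul_zero]
end

section
/- If the trivial extension T(R,R) is nil-reversible, then R is reversible. -/
open TrivSqZeroExt

/-- If the trivial extension T(R,R) is nil-reversible, then R is reversible. -/
theorem trivialExtension_nilReversible_implies_reversible (R : Type*) [Ring R]
    (hnr : ∀ a : TrivSqZeroExt R R, IsNilpotent a →
      ∀ x : TrivSqZeroExt R R, x * a = 0 ↔ a * x = 0) :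
    ∀ a b : R, a * b = 0 → b * a = 0 := by
  intro a b hab
  have hnil : IsNilpotent (inr a : TrivSqZeroExt R R) := ⟨2, by rw [sq, inr_mul_inr]⟩
  have h2 : (inr a : TrivSqZeroExt R R) * inl b = 0 := by
    ext
    · simp
    · simp [hab]
  have h3 := (hnr (inr a) hnil (inl b)).mpr h2
  have := congrArg TrivSqZeroExt.snd h3
  simpa using this
end

section
/- If R is a ring in which (ab)^2 = 0 implies ab = 0 and (ba)^2 = 0 implies ba = 0 for all nilpotent a and all b in R, then R is nil-reversible. -/
/-- If squares of products with nilpotents vanishing forces the products to vanish,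
then the ring is nil-reversible. -/
theorem sq_condition_implies_nilReversible (R : Type*) [Ring R]
    (h1 : ∀ a : R, IsNilpotent a → ∀ b : R, (a * b) * (a * b) = 0 → a * b = 0)
    (h2 : ∀ a : R, IsNilpotent a → ∀ b : R, (b * a) * (b * a) = 0 → b * a = 0) :
    ∀ a : R, IsNilpotent a → ∀ x : R, x * a = 0 ↔ a * x = 0 := by
  intro a ha x
  constructor
  · intro h
    apply h1 a ha x
    calc a * x * (a * x) = a * (x * a) * x := by noncomm_ring
    _ = 0 := by rw [h]; noncomm_ring
  · intro h
    apply h2 a ha x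
    calc x * a * (x * a) = x * (a * x) * a := by noncomm_ring
    _ = 0 := by rw [h]; noncomm_ring
end

section
/- Every unit-central ring is nil-reversible. -/
/-- Every unit-central ring is nil-reversible. -/
theorem unitCentral_is_nilReversible (R : Type*) [Ring R]
    (huc : ∀ u : Rˣ, (u : R) ∈ Set.center R) :
    ∀ a : R, IsNilpotent a → ∀ x : R, x * a = 0 ↔ a * x = 0 := by
  intro a ha x
  have hu : IsUnit (1 + a) := IsNilpotent.isUnit_one_add ha
  obtain ⟨u, hu⟩ := hu
  have hc : ∀ y : R, (1 + a) * y = y * (1 + a) := by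
    intro y
    have := (huc u).comm y
    rw [hu] at this
    exact this
  have hax : ∀ y : R, a * y = y * a := by
    intro y
    have := hc y
    simpa [add_mul, mul_add, add_right_inj] using this
  rw [hax x]
end

section
/- If R is central reversible and 0 is the only central nilpotent element of R, then R is nil-reversible. -/
/-- A central reversible ring whose only central nilpotent is 0 is nil-reversible. -/
theorem centralReversible_is_nilReversible (R : Type*) [Ring R]
    (hcr : ∀ a b : R, a * b = 0 → b * a ∈ Set.center R)
    (hcn : ∀ x : R, IsNilpotent x → x ∈ Set.center R → x = 0) :
    ∀ a : R, IsNilpotent a → ∀ x : R, x * a = 0 ↔ a * x = 0 := by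
  intro a _ x
  constructor
  · intro h
    refine hcn (a * x) ⟨2, ?_⟩ (hcr x a h)
    rw [sq, mul_assoc a x (a * x), ← mul_assoc x a x, h, zero_mul, mul_zero]
  · intro h
    refine hcn (x * a) ⟨2, ?_⟩ (hcr a x h)
    rw [sq, mul_assoc x a (x * a), ← mul_assoc a x a, h, zero_mul, mul_zero]
end

section
/- The Dorroh extension R ⊕_D ℤ of a nil-reversible ring R by the integers is nil-reversible. -/
/-- The Dorroh extension of a nil-reversible ring R by ℤ is nil-reversible. -/
theorem dorroh_nilReversible (R : Type*) [Ring R]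
    (hnr : ∀ a : R, IsNilpotent a → ∀ x : R, x * a = 0 ↔ a * x = 0) :
    ∀ a : Unitization ℤ R, IsNilpotent a →
      ∀ x : Unitization ℤ R, x * a = 0 ↔ a * x = 0 := by
  intro a ha x
  have hfst : a.fst = 0 := (ha.map (Unitization.fstHom ℤ R)).eq_zero
  -- snd of powers
  have hsnd : ∀ k : ℕ, (a ^ (k + 1)).snd = a.snd ^ (k + 1) := by
    intro k
    induction k with
    | zero => simp
    | succ k ih =>
      have hfp : (a ^ (k + 1)).fst = 0 := by
        have := map_pow (Unitization.fstHom ℤ R) a (k + 1)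
        simpa [hfst] using this
      rw [pow_succ, Unitization.snd_mul, ih, hfp, hfst]
      simp [pow_succ]
  have hr : IsNilpotent a.snd := by
    obtain ⟨n, hn⟩ := ha
    match n, hn with
    | 0, hn =>
      exfalso
      have : (1 : Unitization ℤ R).fst = (0 : Unitization ℤ R).fst := by
        rw [← pow_zero a, hn]
      simp at this
    | (k + 1), hn =>
      exact ⟨k + 1, by rw [← hsnd k, hn, Unitization.snd_zero]⟩
  have key := hnr a.snd hr (x.fst • (1 : R) + x.snd)
  have e1 : x * a = 0 ↔ (x.fst • (1 : R) + x.snd) * a.snd = 0 := by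
    rw [Unitization.ext_iff]
    simp [Unitization.fst_mul, Unitization.snd_mul, hfst, add_mul, smul_mul_assoc]
  have e2 : a * x = 0 ↔ a.snd * (x.fst • (1 : R) + x.snd) = 0 := by
    rw [Unitization.ext_iff]
    simp only [Unitization.ext_iff, Unitization.fst_mul, Unitization.snd_mul, hfst,
      Unitization.fst_zero, Unitization.snd_zero, mul_zero, zero_mul, zero_smul, add_zero,
      zero_add, mul_add, mul_smul_comm, smul_add, true_and, eq_self_iff_true]
    simp [mul_smul_comm]
  rw [e1, e2, key]
end

section
/- A subdirect product of nil-reversible rings is nil-reversible: if {I_λ} is a family of ideals of R with ⋂ I_λ = 0 and each quotient R/I_λ is nil-reversible, then R is nil-reversible. -/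
/-- A subdirect product of nil-reversible rings is nil-reversible. -/
theorem subdirectProduct_nilReversible (R : Type*) [Ring R] {ι : Type*}
    (S : ι → Type*) [∀ l, Ring (S l)] (f : ∀ l, R →+* S l)
    (hsurj : ∀ l, Function.Surjective (f l))
    (hker : ∀ a : R, (∀ l, f l a = 0) → a = 0)
    (hnr : ∀ l, ∀ a : S l, IsNilpotent a → ∀ x : S l, x * a = 0 ↔ a * x = 0) :
    ∀ a : R, IsNilpotent a → ∀ x : R, x * a = 0 ↔ a * x = 0 := by
  intro a ha x
  have hna : ∀ l, IsNilpotent (f l a) := fun l => ha.map (f l)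
  constructor
  · intro h
    apply hker
    intro l
    have := (hnr l (f l a) (hna l) (f l x)).mp (by rw [← map_mul, h, map_zero])
    rw [map_mul]; exact this
  · intro h
    apply hker
    intro l
    have := (hnr l (f l a) (hna l) (f l x)).mpr (by rw [← map_mul, h, map_zero])
    rw [map_mul]; exact this
end

section
/- If J is a reduced ideal of a ring R (i.e., J contains no nonzero nilpotent elements of R) and R/J is nil-reversible, then R is nil-reversible. -/
/-- If J is a reduced ideal of R and R/J is nil-reversible, then R is nil-reversible.
(The quotient R/J is presented as the image of a surjective ring hom with kernel J.) -/
theorem reduced_ideal_quotient_nilReversible (R S : Type*) [Ring R] [Ring S]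
    (f : R →+* S) (hsurj : Function.Surjective f)
    (hred : ∀ x : R, f x = 0 → IsNilpotent x → x = 0)
    (hnr : ∀ a : S, IsNilpotent a → ∀ x : S, x * a = 0 ↔ a * x = 0) :
    ∀ a : R, IsNilpotent a → ∀ x : R, x * a = 0 ↔ a * x = 0 := by
  intro a hna x
  have hfna : IsNilpotent (f a) := hna.map f
  constructor
  · intro h
    have h1 : f x * f a = 0 := by rw [← map_mul, h, map_zero]
    have h2 : f (a * x) = 0 := by rw [map_mul]; exact (hnr (f a) hfna (f x)).mp h1
    refine hred (a * x) h2 ⟨2, ?_⟩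
    calc (a * x) ^ 2 = a * (x * a) * x := by noncomm_ring
    _ = 0 := by rw [h]; noncomm_ring
  · intro h
    have h1 : f a * f x = 0 := by rw [← map_mul, h, map_zero]
    have h2 : f (x * a) = 0 := by rw [map_mul]; exact (hnr (f a) hfna (f x)).mpr h1
    refine hred (x * a) h2 ⟨2, ?_⟩
    calc (x * a) ^ 2 = x * (a * x) * a := by noncomm_ring
    _ = 0 := by rw [h]; noncomm_ring
end

section
/- If R is an Armendariz nil-reversible ring, then the polynomial ring R[x] is nil-reversible. -/
open Polynomial in
private lemma arm_absorb {R : Type*} [Ring R]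
    (harm : ∀ f g : R[X], f * g = 0 → ∀ i j : ℕ, f.coeff i * g.coeff j = 0)
    (f : R[X]) (i : ℕ) :
    ∀ k : ℕ, ∀ p : R, C p * f ^ k = 0 → p * (f.coeff i) ^ k = 0 := by
  intro k
  induction k with
  | zero =>
    intro p hp
    simp only [pow_zero, mul_one] at hp ⊢
    exact (C_eq_zero).mp hp
  | succ k ih =>
    intro p hp
    have h1 : (C p * f) * f ^ k = 0 := by
      rw [mul_assoc, ← pow_succ']; exact hp
    have h2 : ∀ j : ℕ, (p * f.coeff i) * (f ^ k).coeff j = 0 := by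
      intro j
      have := harm (C p * f) (f ^ k) h1 i j
      rwa [coeff_C_mul] at this
    have h3 : C (p * f.coeff i) * f ^ k = 0 := by
      ext j
      rw [coeff_C_mul, coeff_zero]
      exact h2 j
    have := ih (p * f.coeff i) h3
    rwa [pow_succ', ← mul_assoc]

open Polynomial in
private lemma arm_nilcoeff {R : Type*} [Ring R]
    (harm : ∀ f g : R[X], f * g = 0 → ∀ i j : ℕ, f.coeff i * g.coeff j = 0)
    (f : R[X]) (hf : IsNilpotent f) (i : ℕ) : IsNilpotent (f.coeff i) := by
  obtain ⟨n, hn⟩ := hf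
  refine ⟨n, ?_⟩
  have := arm_absorb harm f i n 1 (by simpa using hn)
  simpa using this

open Polynomial in
/-- If R is Armendariz and nil-reversible, then R[x] is nil-reversible. -/
theorem armendariz_nilReversible_poly (R : Type*) [Ring R]
    (harm : ∀ f g : R[X], f * g = 0 → ∀ i j : ℕ, f.coeff i * g.coeff j = 0)
    (hnr : ∀ a : R, IsNilpotent a → ∀ x : R, x * a = 0 ↔ a * x = 0) :
    ∀ f : R[X], IsNilpotent f → ∀ g : R[X], g * f = 0 ↔ f * g = 0 := by
  intro f hf g
  have hnilc : ∀ i, IsNilpotent (f.coeff i) := arm_nilcoeff harm f hf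
  constructor
  · intro h
    have hij : ∀ i j, f.coeff i * g.coeff j = 0 := by
      intro i j
      have := harm g f h j i
      exact (hnr (f.coeff i) (hnilc i) (g.coeff j)).mp this
    ext n
    rw [coeff_mul, coeff_zero]
    exact Finset.sum_eq_zero fun x _ => hij x.1 x.2
  · intro h
    have hij : ∀ i j, g.coeff j * f.coeff i = 0 := by
      intro i j
      exact (hnr (f.coeff i) (hnilc i) (g.coeff j)).mpr (harm f g h i j)
    ext n
    rw [coeff_mul, coeff_zero]
    exact Finset.sum_eq_zero fun x _ => hij x.2 x.1
end

section
/- Let Δ be a multiplicatively closed set of central non-zero-divisors in a ring R. Then R is nil-reversible if and only if the localization Δ^{-1}R is nil-reversible. -/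
/-- For Δ a multiplicatively closed set of central non-zero-divisors of R, the ring R
is nil-reversible iff the localization Δ⁻¹R is nil-reversible. (The localization is
presented as a ring T together with a ring hom f : R →+* T which is injective,
inverts Δ, and such that every element of T is of the form f a * (f s)⁻¹.) -/
theorem localization_nilReversible_iff (R T : Type*) [Ring R] [Ring T]
    (Δ : Submonoid R) (hcent : ∀ s ∈ Δ, s ∈ Set.center R)
    (hnzd : ∀ s ∈ Δ, ∀ x : R, (s * x = 0 → x = 0) ∧ (x * s = 0 → x = 0))
    (f : R →+* T) (hinj : Function.Injective f)
    (hunit : ∀ s ∈ Δ, IsUnit (f s))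
    (hsurj : ∀ t : T, ∃ a : R, ∃ s ∈ Δ, t * f s = f a) :
    (∀ a : R, IsNilpotent a → ∀ x : R, x * a = 0 ↔ a * x = 0) ↔
    (∀ a : T, IsNilpotent a → ∀ x : T, x * a = 0 ↔ a * x = 0) := by
  have hcommR : ∀ s ∈ Δ, ∀ c : R, s * c = c * s := fun s hs c => (hcent s hs).comm c
  -- f s is central in T for s ∈ Δ
  have hcomm : ∀ s ∈ Δ, ∀ t : T, f s * t = t * f s := by
    intro s hs t
    obtain ⟨c, t', ht', hct⟩ := hsurj t
    have hu := hunit t' ht'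
    apply hu.mul_right_cancel
    calc f s * t * f t' = f s * (t * f t') := by rw [mul_assoc]
      _ = f s * f c := by rw [hct]
      _ = f (s * c) := by rw [map_mul]
      _ = f (c * s) := by rw [hcommR s hs c]
      _ = f c * f s := by rw [map_mul]
      _ = t * f t' * f s := by rw [hct]
      _ = t * (f s * f t') := by rw [mul_assoc, ← map_mul, ← map_mul, hcommR t' ht' s]
      _ = t * f s * f t' := by rw [mul_assoc]
  have cancel : ∀ v : T, IsUnit v → ∀ y : T, y * v = 0 → y = 0 := by
    intro v hv y h
    exact hv.mul_right_cancel (by rw [zero_mul]; exact h)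
  -- rearrangement lemma
  have rearr : ∀ s ∈ Δ, ∀ u ∈ Δ, ∀ y z : T,
      (y * f u) * (z * f s) = y * z * (f u * f s) := by
    intro s hs u hu y z
    rw [mul_assoc, ← mul_assoc (f u), hcomm u hu z, mul_assoc, ← mul_assoc]
  constructor
  · -- R nil-reversible → T nil-reversible
    intro hR a ha x
    obtain ⟨b, s, hs, hbs⟩ := hsurj a
    obtain ⟨c, u, hu, hcu⟩ := hsurj x
    have hus : IsUnit (f s) := hunit s hs
    have huu : IsUnit (f u) := hunit u hu
    obtain ⟨n, hn⟩ := ha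
    have hcas : Commute a (f s) := (hcomm s hs a).symm
    have hbnilR : IsNilpotent b := by
      refine ⟨n, hinj ?_⟩
      rw [map_pow, ← hbs, hcas.mul_pow, hn, zero_mul, map_zero]
    constructor
    · intro hxa
      have h1 : f c * f b = 0 := by
        rw [← hcu, ← hbs, rearr s hs u hu, hxa, zero_mul]
      have h2 : c * b = 0 := hinj (by rw [map_mul, h1, map_zero])
      have h3 : b * c = 0 := (hR b hbnilR c).mp h2
      have h4 : f b * f c = 0 := by rw [← map_mul, h3, map_zero]
      have h5 : a * x * (f s * f u) = 0 := by
        rw [← rearr u hu s hs a x, hbs, hcu]; exact h4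
      exact cancel _ (hus.mul huu) _ h5
    · intro hax
      have h1 : f b * f c = 0 := by
        rw [← hcu, ← hbs, rearr u hu s hs, hax, zero_mul]
      have h2 : b * c = 0 := hinj (by rw [map_mul, h1, map_zero])
      have h3 : c * b = 0 := (hR b hbnilR c).mpr h2
      have h4 : f c * f b = 0 := by rw [← map_mul, h3, map_zero]
      have h5 : x * a * (f u * f s) = 0 := by
        rw [← rearr s hs u hu x a, hbs, hcu]; exact h4
      exact cancel _ (huu.mul hus) _ h5
  · -- T nil-reversible → R nil-reversible
    intro hT a ha x
    have haT : IsNilpotent (f a) := ha.map f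
    constructor
    · intro h
      have : f a * f x = 0 := (hT (f a) haT (f x)).mp (by rw [← map_mul, h, map_zero])
      exact hinj (by rw [map_mul, this, map_zero])
    · intro h
      have : f x * f a = 0 := (hT (f a) haT (f x)).mpr (by rw [← map_mul, h, map_zero])
      exact hinj (by rw [map_mul, this, map_zero])
end

section
/- If R is nil-reversible, then the set of nilpotent elements of the polynomial ring R[x] equals N(R)[x], the set of polynomials all of whose coefficients are nilpotent. -/
/-!
If `a ∈ R` is nilpotent, nil-reversibility makes the left and right annihilators of every power
of `e = C a` in `R[X]` coincide, so they are two-sided ideals. The elements `x` with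
`l(e^(k+1)) x ⊆ l(e^k)` for all `k` then form a two-sided ideal containing `e`, and `x ^ n = 0`
for each of them once `e ^ n = 0`. Hence adding `C a * p` to a nilpotent polynomial keeps it
nilpotent. A nilpotent polynomial has a nilpotent leading coefficient, so peeling off leading
terms one at a time gives both directions.
-/

namespace TwoSidedIdeal

variable {S : Type*} [Ring S]

theorem isNilpotent_of_sub_mem {I : TwoSidedIdeal S} (hI : ∀ z ∈ I, IsNilpotent z) {x y : S}
    (hx : IsNilpotent x) (hyx : y - x ∈ I) : IsNilpotent y := by
  obtain ⟨K, hK⟩ := hx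
  have hpow : y ^ K - x ^ K ∈ I :=
    (I.rel_iff _ _).1 (I.ringCon.toCon.pow K ((I.rel_iff _ _).2 hyx))
  rw [hK, sub_zero] at hpow
  obtain ⟨m, hm⟩ := hI _ hpow
  exact ⟨K * m, by rw [pow_mul, hm]⟩

end TwoSidedIdeal

section PowReversible

variable {S : Type*} [Ring S] {e : S}

theorem mul_mul_pow_eq_zero (he : ∀ k x, x * e ^ k = 0 ↔ e ^ k * x = 0) {k : ℕ} {x : S}
    (hx : x * e ^ k = 0) (r : S) : x * r * e ^ k = 0 := by
  rw [he, ← mul_assoc, (he k x).1 hx, zero_mul]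

/-- An element `x` lies in this ideal when right multiplication by `x` maps the left annihilator
of `e ^ (k + 1)` into that of `e ^ k`. -/
def shiftIdeal (he : ∀ k x, x * e ^ k = 0 ↔ e ^ k * x = 0) : TwoSidedIdeal S :=
  .mk' {x | ∀ k y, y * e ^ (k + 1) = 0 → y * x * e ^ k = 0}
    (fun k y _ => by rw [mul_zero, zero_mul])
    (fun hx hy k y h => by rw [mul_add, add_mul, hx k y h, hy k y h, add_zero])
    (fun hx k y h => by rw [mul_neg, neg_mul, hx k y h, neg_zero])
    (fun {r _} hx k y h => by rw [← mul_assoc]; exact hx k _ (mul_mul_pow_eq_zero he h r))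
    (fun {_ r} hx k y h => by rw [← mul_assoc]; exact mul_mul_pow_eq_zero he (hx k y h) r)

theorem mem_shiftIdeal_self (he : ∀ k x, x * e ^ k = 0 ↔ e ^ k * x = 0) : e ∈ shiftIdeal he :=
  (TwoSidedIdeal.mem_mk' ..).2 fun k y h => by rwa [mul_assoc, ← pow_succ']

theorem pow_eq_zero_of_mem_shiftIdeal {he : ∀ k x, x * e ^ k = 0 ↔ e ^ k * x = 0} {n : ℕ}
    (hn : e ^ n = 0) {x : S} (hx : x ∈ shiftIdeal he) : x ^ n = 0 := by
  have key : ∀ j k, j + k = n → x ^ j * e ^ k = 0 := by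
    intro j
    induction j with
    | zero => intro k hk; rw [pow_zero, one_mul, ← hn, ← hk, zero_add]
    | succ j ih =>
      intro k hk
      rw [pow_succ]
      exact (TwoSidedIdeal.mem_mk' ..).1 hx k _ (ih (k + 1) (by omega))
  simpa using key n 0 rfl

theorem IsNilpotent.add_mul_of_pow_reversible (he : ∀ k x, x * e ^ k = 0 ↔ e ^ k * x = 0)
    {F : S} (hF : IsNilpotent F) (hen : IsNilpotent e) (v : S) : IsNilpotent (F + e * v) := by
  obtain ⟨n, hn⟩ := hen
  refine TwoSidedIdeal.isNilpotent_of_sub_mem (I := shiftIdeal he)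
    (fun z hz => ⟨n, pow_eq_zero_of_mem_shiftIdeal hn hz⟩) hF ?_
  rw [add_sub_cancel_left]
  exact (shiftIdeal he).mul_mem_right _ _ (mem_shiftIdeal_self he)

end PowReversible

def IsNilReversible (R : Type*) [Ring R] : Prop :=
  ∀ a : R, IsNilpotent a → ∀ x : R, x * a = 0 ↔ a * x = 0

namespace Polynomial

variable {R : Type*} [Ring R]

theorem mul_C_eq_zero_iff {b : R} (hb : ∀ x : R, x * b = 0 ↔ b * x = 0) (p : R[X]) :
    p * C b = 0 ↔ C b * p = 0 := by
  simp only [Polynomial.ext_iff, coeff_mul_C, coeff_C_mul, coeff_zero, hb]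

theorem mul_C_pow_eq_zero_iff (hR : IsNilReversible R) {a : R} (ha : IsNilpotent a) (k : ℕ)
    (p : R[X]) :
    p * C a ^ k = 0 ↔ C a ^ k * p = 0 := by
  cases k with
  | zero => simp
  | succ k => rw [← C_pow]; exact mul_C_eq_zero_iff (hR _ (ha.pow_succ k)) p

theorem _root_.IsNilpotent.add_C_mul (hR : IsNilReversible R) {F : R[X]} (hF : IsNilpotent F)
    {a : R} (ha : IsNilpotent a) (p : R[X]) : IsNilpotent (F + C a * p) :=
  hF.add_mul_of_pow_reversible (mul_C_pow_eq_zero_iff hR ha) (ha.map C) p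

theorem isNilpotent_leadingCoeff {f : R[X]} (hf : IsNilpotent f) :
    IsNilpotent f.leadingCoeff := by
  obtain ⟨K, hK⟩ := hf
  exact ⟨K, by rw [← coeff_pow_mul_natDegree, hK, coeff_zero]⟩

theorem isNilpotent_iff_forall_isNilpotent_coeff (hR : IsNilReversible R) (f : R[X]) :
    IsNilpotent f ↔ ∀ i, IsNilpotent (f.coeff i) := by
  induction h : f.support.card generalizing f with
  | zero => simp [card_support_eq_zero.1 h, IsNilpotent.zero]
  | succ n ih =>
    have hg : f.eraseLead.support.card = n := card_support_eraseLead' h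
    constructor
    · intro hf
      have hc := isNilpotent_leadingCoeff hf
      have hgn : IsNilpotent f.eraseLead := by
        rw [← self_sub_C_mul_X_pow, sub_eq_add_neg, ← neg_mul, ← C_neg]
        exact hf.add_C_mul hR hc.neg _
      intro i
      rcases eq_or_ne i f.natDegree with rfl | hi
      · exact hc
      · rw [← eraseLead_coeff_of_ne i hi]
        exact (ih _ hg).1 hgn i
    · intro hf
      rw [← eraseLead_add_C_mul_X_pow f]
      refine ((ih _ hg).2 fun i => ?_).add_C_mul hR (hf _) _
      rw [eraseLead_coeff]
      split_ifs
      exacts [IsNilpotent.zero, hf i]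

end Polynomial

open Polynomial in
/-- If R is nil-reversible then N(R[x]) = N(R)[x]. -/
theorem nilReversible_nilpotent_poly_iff (R : Type*) [Ring R]
    (hnr : ∀ a : R, IsNilpotent a → ∀ x : R, x * a = 0 ↔ a * x = 0) :
    ∀ f : R[X], IsNilpotent f ↔ ∀ i : ℕ, IsNilpotent (f.coeff i) :=
  isNilpotent_iff_forall_isNilpotent_coeff hnr
end
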